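/- arXiv:0901.3606 — 4 statements merged into one kernel-verified Lean document; each statement's English description precedes it below -/
import Mathlib

section
/- Let Σ be a finite alphabet and X ⊆ Σ^ℤ a subshift. Then X is a finite union of periodic orbits if and only if every past in X extends uniquely, i.e., for all x, y ∈ X, if x|_{-ℕ} = y|_{-ℕ} then x = y. -/
/-!
Two periodic points have a common period, so if they agree on the past they agree everywhere.
Conversely, if pasts extend uniquely, compactness of `X` makes the extension uniform: some window
of `N` past symbols determines the next one. The shift then acts on the finitely many `N`-words
of `X` as a surjective, hence bijective, map, so a single word determines the whole point and `X`
is finite; in a finite shift-invariant set every point is periodic.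
-/

/-- The two-sided shift map on `ℤ → A`. -/
def shiftMap {A : Type*} (x : ℤ → A) : ℤ → A := fun i => x (i + 1)

open Set Function

def shiftBy {A : Type*} (a : ℤ) (x : ℤ → A) : ℤ → A := fun i => x (i + a)

section Shift

variable {A : Type*} {X : Set (ℤ → A)}

@[simp]
lemma shiftBy_apply (a : ℤ) (x : ℤ → A) (i : ℤ) : shiftBy a x i = x (i + a) := rfl

@[simp]
lemma shiftBy_zero (x : ℤ → A) : shiftBy 0 x = x := by
  funext i
  simp

lemma shiftMap_shiftBy (a : ℤ) (x : ℤ → A) : shiftMap (shiftBy a x) = shiftBy (a + 1) x := by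
  funext i
  simp only [shiftMap, shiftBy_apply]
  ring_nf

lemma shiftBy_mem (hinv : shiftMap '' X = X) (a : ℤ) {x : ℤ → A} (hx : x ∈ X) :
    shiftBy a x ∈ X := by
  induction a using Int.induction_on with
  | zero => rwa [shiftBy_zero]
  | succ n ih => rw [← hinv, ← shiftMap_shiftBy]; exact mem_image_of_mem _ ih
  | pred n ih =>
    rw [← hinv] at ih
    obtain ⟨y, hy, hxy⟩ := ih
    convert hy using 1
    funext i
    have hyi := congrFun hxy (i - 1)
    simp only [shiftMap, shiftBy_apply, sub_add_cancel] at hyi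
    rw [shiftBy_apply, hyi]
    ring_nf

end Shift

lemma eq_of_periodic_of_eqOn_neg {α : Type*} {x y : ℤ → α} {p q : ℤ} (hp : 0 < p) (hq : 0 < q)
    (hx : Periodic x p) (hy : Periodic y q) (h : ∀ i < 0, x i = y i) : x = y := by
  funext i
  have hxpq : Periodic x (p * q) := mul_comm q p ▸ hx.int_mul q
  have hypq : Periodic y (p * q) := hy.int_mul p
  have hneg : i - (|i| + 1) * (p * q) < 0 := by
    have : 1 ≤ p * q := mul_pos hp hq
    nlinarith [le_abs_self i, abs_nonneg i]
  rw [← hxpq.sub_int_mul_eq (|i| + 1), ← hypq.sub_int_mul_eq (|i| + 1)]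
  exact h _ hneg

lemma exists_periodic_of_finite {A : Type*} {X : Set (ℤ → A)} (hfin : X.Finite)
    (hinv : shiftMap '' X = X) {x : ℤ → A} (hx : x ∈ X) : ∃ p : ℕ, 1 ≤ p ∧ Periodic x p := by
  obtain ⟨m, n, hmn, heq⟩ := hfin.exists_lt_map_eq_of_forall_mem
    (f := fun n : ℕ => shiftBy n x) (fun n => shiftBy_mem hinv n hx)
  refine ⟨n - m, by omega, fun i => ?_⟩
  have hi := congrFun heq (i - m)
  simp only [shiftBy_apply, sub_add_cancel] at hi
  rw [hi]
  congr 1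
  push_cast [hmn.le]
  ring

def PastWindowDetermines {A : Type*} (X : Set (ℤ → A)) (N : ℕ) : Prop :=
  ∀ x ∈ X, ∀ y ∈ X, EqOn x y (Ico (-N : ℤ) 0) → x 0 = y 0

lemma exists_pastWindowDetermines {A : Type*} [TopologicalSpace A] [DiscreteTopology A]
    {X : Set (ℤ → A)} (hX : IsCompact X)
    (hext : ∀ x ∈ X, ∀ y ∈ X, (∀ i : ℤ, i < 0 → x i = y i) → x = y) :
    ∃ N, PastWindowDetermines X N := by
  by_contra! hbad
  let t : ℕ → Set ((ℤ → A) × (ℤ → A)) := fun N =>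
    X ×ˢ X ∩ {p | EqOn p.1 p.2 (Ico (-N : ℤ) 0)} ∩ {p | p.1 0 ≠ p.2 0}
  have hmono : ∀ N, t (N + 1) ⊆ t N := fun N p ⟨⟨hp, hEq⟩, hne⟩ =>
    ⟨⟨hp, hEq.mono (Ico_subset_Ico (by omega) le_rfl)⟩, hne⟩
  have hnonempty : ∀ N, (t N).Nonempty := by
    intro N
    simp only [PastWindowDetermines, not_forall] at hbad
    obtain ⟨x, hx, y, hy, hEq, hne⟩ := hbad N
    exact ⟨(x, y), ⟨⟨hx, hy⟩, hEq⟩, hne⟩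
  have hclosed : ∀ N, IsClosed (t N) := by
    intro N
    have hEqOn : {p : (ℤ → A) × (ℤ → A) | EqOn p.1 p.2 (Ico (-N : ℤ) 0)} =
        ⋂ i ∈ Ico (-N : ℤ) 0, {p | p.1 i = p.2 i} := by
      ext
      simp [EqOn]
    refine ((hX.isClosed.prod hX.isClosed).inter ?_).inter ?_
    · rw [hEqOn]
      exact isClosed_biInter fun i _ => isClosed_eq (by fun_prop) (by fun_prop)
    · exact (isClosed_discrete {q : A × A | q.1 ≠ q.2}).preimage
        (f := fun p : (ℤ → A) × (ℤ → A) => (p.1 0, p.2 0)) (by fun_prop)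
  have hcompact : IsCompact (t 0) := (hX.prod hX).of_isClosed_subset (hclosed 0) fun p hp => hp.1.1
  obtain ⟨⟨x, y⟩, hxy⟩ :=
    IsCompact.nonempty_iInter_of_sequence_nonempty_isCompact_isClosed t hmono hnonempty hcompact
      hclosed
  rw [mem_iInter] at hxy
  have hpast : ∀ i : ℤ, i < 0 → x i = y i := fun i hi => (hxy i.natAbs).1.2 ⟨by omega, hi⟩
  exact (hxy 0).2 (congrFun (hext x (hxy 0).1.1.1 y (hxy 0).1.1.2 hpast) 0)

namespace PastWindowDetermines

variable {A : Type*} {X : Set (ℤ → A)} {N : ℕ} {x y : ℤ → A}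

lemma eqOn_shiftMap (hdet : PastWindowDetermines X N) (hx : x ∈ X) (hy : y ∈ X)
    (h : EqOn x y (Ico (-N : ℤ) 0)) : EqOn (shiftMap x) (shiftMap y) (Ico (-N : ℤ) 0) := by
  rintro i ⟨hi₁, hi₂⟩
  simp only [shiftMap]
  rcases (by omega : i + 1 = 0 ∨ i + 1 < 0) with hi | hi
  · rw [hi]
    exact hdet x hx y hy h
  · exact h ⟨by omega, hi⟩

/-- The shift induces a surjective, hence injective, self-map of the finite set of words on
`[-N, 0)` seen in `X`. -/
lemma eqOn_of_eqOn_shiftMap [Finite A] (hinv : shiftMap '' X = X)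
    (hdet : PastWindowDetermines X N) (hx : x ∈ X) (hy : y ∈ X)
    (h : EqOn (shiftMap x) (shiftMap y) (Ico (-N : ℤ) 0)) : EqOn x y (Ico (-N : ℤ) 0) := by
  have : Nonempty (ℤ → A) := ⟨x⟩
  let r := (Ico (-N : ℤ) 0).domRestrict (π := fun _ => A)
  let g := fun w => r (shiftMap (invFunOn r X w))
  have hg : ∀ z ∈ X, g (r z) = r (shiftMap z) := fun z hz =>
    domRestrict_eq_domRestrict_iff.2 <| hdet.eqOn_shiftMap (invFunOn_mem ⟨z, hz, rfl⟩) hz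
      (domRestrict_eq_domRestrict_iff.1 (invFunOn_eq ⟨z, hz, rfl⟩))
  have hmaps : MapsTo g (r '' X) (r '' X) := by
    rintro _ ⟨z, hz, rfl⟩
    rw [hg z hz]
    exact mem_image_of_mem r (hinv ▸ mem_image_of_mem shiftMap hz)
  have hsurj : SurjOn g (r '' X) (r '' X) := by
    rintro _ ⟨z, hz, rfl⟩
    rw [← hinv] at hz
    obtain ⟨u, hu, rfl⟩ := hz
    exact ⟨r u, mem_image_of_mem r hu, hg u hu⟩
  have hinj := (((toFinite (r '' X)).surjOn_iff_bijOn_of_mapsTo hmaps).1 hsurj).injOn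
  rw [← domRestrict_eq_domRestrict_iff] at h ⊢
  exact hinj (mem_image_of_mem r hx) (mem_image_of_mem r hy)
    ((hg x hx).trans (h.trans (hg y hy).symm))

lemma eqOn_shiftBy [Finite A] (hinv : shiftMap '' X = X) (hdet : PastWindowDetermines X N)
    (hx : x ∈ X) (hy : y ∈ X) (h : EqOn x y (Ico (-N : ℤ) 0)) (a : ℤ) :
    EqOn (shiftBy a x) (shiftBy a y) (Ico (-N : ℤ) 0) := by
  induction a using Int.induction_on with
  | zero => simpa using h
  | succ n ih =>
    rw [← shiftMap_shiftBy, ← shiftMap_shiftBy]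
    exact hdet.eqOn_shiftMap (shiftBy_mem hinv _ hx) (shiftBy_mem hinv _ hy) ih
  | pred n ih =>
    rw [← sub_add_cancel (-(n : ℤ)) 1, ← shiftMap_shiftBy, ← shiftMap_shiftBy] at ih
    exact hdet.eqOn_of_eqOn_shiftMap hinv (shiftBy_mem hinv _ hx) (shiftBy_mem hinv _ hy) ih

lemma finite [Finite A] (hinv : shiftMap '' X = X) (hdet : PastWindowDetermines X N) :
    X.Finite := by
  refine (toFinite _).of_finite_image (f := (Ico (-N : ℤ) 0).domRestrict) fun x hx y hy h => ?_
  funext a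
  simpa using hdet _ (shiftBy_mem hinv a hx) _ (shiftBy_mem hinv a hy)
    (hdet.eqOn_shiftBy hinv hx hy (domRestrict_eq_domRestrict_iff.1 h) a)

end PastWindowDetermines

theorem finite_union_periodic_iff_unique_extension_general
    {A : Type*} [Fintype A] [TopologicalSpace A] [DiscreteTopology A]
    (X : Set (ℤ → A)) (hcl : IsClosed X)
    (hinv : shiftMap '' X = X) :
    (X.Finite ∧ ∀ x ∈ X, ∃ p : ℕ, 1 ≤ p ∧ ∀ i : ℤ, x (i + p) = x i) ↔
      (∀ x ∈ X, ∀ y ∈ X, (∀ i : ℤ, i < 0 → x i = y i) → x = y) := by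
  constructor
  · rintro ⟨-, hper⟩ x hx y hy hpast
    obtain ⟨p, hp, hxp⟩ := hper x hx
    obtain ⟨q, hq, hyq⟩ := hper y hy
    exact eq_of_periodic_of_eqOn_neg (by omega) (by omega) hxp hyq hpast
  · intro hext
    obtain ⟨N, hdet⟩ := exists_pastWindowDetermines hcl.isCompact hext
    have hfin := hdet.finite hinv
    exact ⟨hfin, fun x hx => exists_periodic_of_finite hfin hinv hx⟩

/-- A subshift over a finite alphabet is a finite union of periodic orbits
iff every past extends uniquely (points agreeing on all negative coordinates coincide). -/
theorem finite_union_periodic_iff_unique_extension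
    {A : Type*} [Fintype A] [TopologicalSpace A] [DiscreteTopology A]
    (X : Set (ℤ → A)) (hne : X.Nonempty) (hcl : IsClosed X)
    (hinv : shiftMap '' X = X) :
    (X.Finite ∧ ∀ x ∈ X, ∃ p : ℕ, 1 ≤ p ∧ ∀ i : ℤ, x (i + p) = x i) ↔
      (∀ x ∈ X, ∀ y ∈ X, (∀ i : ℤ, i < 0 → x i = y i) → x = y) :=
  finite_union_periodic_iff_unique_extension_general X hcl hinv
end

section
/- Let Σ be a finite alphabet and X ⊆ Σ^ℤ a subshift. If there exists n ∈ ℕ such that for all x, y ∈ X, x(−n)x(−n+1)...x(−1) = y(−n)y(−n+1)...y(−1) implies x(0) = y(0), then X is a finite union of periodic orbits. -/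
namespace FWPaux

variable {A : Type*}

lemma shift_injective : Function.Injective (shiftMap (A := A)) := by
  intro a b h
  funext i
  have := congrFun h (i - 1)
  simpa [shiftMap] using this

/-- Shift by an arbitrary integer. -/
def T (m : ℤ) (x : ℤ → A) : ℤ → A := fun i => x (i + m)

lemma shift_T (m : ℤ) (x : ℤ → A) : shiftMap (T (m - 1) x) = T m x := by
  funext i
  show x (i + 1 + (m - 1)) = x (i + m)
  congr 1; ring

lemma mem_shift {X : Set (ℤ → A)} (hinv : shiftMap '' X = X) {x : ℤ → A}
    (hx : x ∈ X) : shiftMap x ∈ X := by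
  rw [← hinv]; exact Set.mem_image_of_mem _ hx

lemma T_mem {X : Set (ℤ → A)} (hinv : shiftMap '' X = X) {x : ℤ → A}
    (hx : x ∈ X) : ∀ m : ℤ, T m x ∈ X := by
  have fwd : ∀ k : ℕ, T (k : ℤ) x ∈ X := by
    intro k
    induction k with
    | zero =>
      have e : T ((0:ℕ) : ℤ) x = x := by funext i; simp [T]
      rw [e]; exact hx
    | succ k ih =>
      have := mem_shift hinv ih
      have e : shiftMap (T (k : ℤ) x) = T ((k + 1 : ℕ) : ℤ) x := by
        have := shift_T ((k + 1 : ℕ) : ℤ) x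
        rw [← this]; congr 1; push_cast; ring
      rwa [e] at this
  have bwd : ∀ k : ℕ, T (-(k : ℤ)) x ∈ X := by
    intro k
    induction k with
    | zero =>
      have e : T (-((0:ℕ) : ℤ)) x = x := by funext i; simp [T]
      rw [e]; exact hx
    | succ k ih =>
      obtain ⟨y, hy, hsy⟩ : ∃ y ∈ X, shiftMap y = T (-(k : ℤ)) x := by
        have : T (-(k : ℤ)) x ∈ shiftMap '' X := by rw [hinv]; exact ih
        obtain ⟨y, hy, hsy⟩ := this
        exact ⟨y, hy, hsy⟩
      have e : shiftMap (T (-((k + 1 : ℕ) : ℤ)) x) = T (-(k : ℤ)) x := by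
        have := shift_T (-(k : ℤ)) x
        rw [← this]; congr 1; push_cast; ring
      have : y = T (-((k + 1 : ℕ) : ℤ)) x := shift_injective (by rw [hsy, e])
      rwa [this] at hy
  intro m
  rcases le_or_gt 0 m with hm | hm
  · have := fwd m.toNat
    rwa [Int.toNat_of_nonneg hm] at this
  · have := bwd (-m).toNat
    rwa [Int.toNat_of_nonneg (by omega), neg_neg] at this

/-- The window determines everything from `-n` onwards. -/
lemma det {X : Set (ℤ → A)} (hinv : shiftMap '' X = X) (n : ℕ)
    (hpred : ∀ x ∈ X, ∀ y ∈ X,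
      (∀ i : ℕ, 1 ≤ i → i ≤ n → x (-(i : ℤ)) = y (-(i : ℤ))) → x 0 = y 0)
    {x y : ℤ → A} (hx : x ∈ X) (hy : y ∈ X)
    (h : ∀ i : ℕ, 1 ≤ i → i ≤ n → x (-(i : ℤ)) = y (-(i : ℤ))) :
    ∀ j : ℤ, -(n : ℤ) ≤ j → x j = y j := by
  have key : ∀ k : ℕ, x (-(n : ℤ) + k) = y (-(n : ℤ) + k) := by
    intro k
    induction k using Nat.strong_induction_on with
    | _ k ih =>
      by_cases hk : k < n
      · have := h (n - k) (by omega) (by omega)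
        have e : -((n - k : ℕ) : ℤ) = -(n : ℤ) + k := by omega
        rwa [e] at this
      · set m : ℤ := -(n : ℤ) + k with hm
        have window : ∀ i : ℕ, 1 ≤ i → i ≤ n →
            (T m x) (-(i : ℤ)) = (T m y) (-(i : ℤ)) := by
          intro i h1 h2
          show x (-(i : ℤ) + m) = y (-(i : ℤ) + m)
          have e : -(i : ℤ) + m = -(n : ℤ) + ((k - i : ℕ) : ℤ) := by
            rw [hm]; omega
          rw [e]
          exact ih (k - i) (by omega)
        have := hpred (T m x) (T_mem hinv hx m) (T m y) (T_mem hinv hy m) window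
        simpa [T] using this
  intro j hj
  have := key (j + n).toNat
  have e : -(n : ℤ) + ((j + n).toNat : ℤ) = j := by omega
  rwa [e] at this

lemma per_mul {x : ℤ → A} {p : ℕ} (hp : ∀ i : ℤ, x (i + p) = x i) :
    ∀ t : ℕ, ∀ i : ℤ, x (i + (t * p : ℕ)) = x i := by
  intro t
  induction t with
  | zero => intro i; simp
  | succ t ih =>
    intro i
    have e : (i + ((t + 1) * p : ℕ) : ℤ) = (i + (t * p : ℕ)) + p := by
      push_cast; ring
    rw [e, hp, ih]

end FWPaux

open FWPaux in
/-- If in a subshift some fixed window x(−n)…x(−1) of the past determines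
x(0), then the subshift is a finite union of periodic orbits. -/
theorem finite_window_prediction_implies_finite
    {A : Type*} [Fintype A] [TopologicalSpace A] [DiscreteTopology A]
    (X : Set (ℤ → A)) (hne : X.Nonempty) (hcl : IsClosed X)
    (hinv : shiftMap '' X = X)
    (hpred : ∃ n : ℕ, ∀ x ∈ X, ∀ y ∈ X,
      (∀ i : ℕ, 1 ≤ i → i ≤ n → x (-(i : ℤ)) = y (-(i : ℤ))) → x 0 = y 0) :
    X.Finite ∧ ∀ x ∈ X, ∃ p : ℕ, 1 ≤ p ∧ ∀ i : ℤ, x (i + p) = x i := by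
  obtain ⟨n, hpred⟩ := hpred
  -- if two points of X have the same window, they agree from -n on after shifting
  have agree : ∀ x ∈ X, ∀ m1 m2 : ℕ,
      (∀ i : ℕ, 1 ≤ i → i ≤ n → x (-(i : ℤ) - m1) = x (-(i : ℤ) - m2)) →
      ∀ j : ℤ, -(n : ℤ) ≤ j → x (j - m1) = x (j - m2) := by
    intro x hx m1 m2 hw j hj
    have h := det hinv n hpred (T_mem hinv hx (-(m1 : ℤ)))
      (T_mem hinv hx (-(m2 : ℤ))) ?_ j hj
    · have e1 : j + -(m1 : ℤ) = j - m1 := by ring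
      have e2 : j + -(m2 : ℤ) = j - m2 := by ring
      simpa [T, e1, e2] using h
    · intro i h1 h2
      show x (-(i : ℤ) + -(m1 : ℤ)) = x (-(i : ℤ) + -(m2 : ℤ))
      have e1 : -(i : ℤ) + -(m1 : ℤ) = -(i : ℤ) - m1 := by ring
      have e2 : -(i : ℤ) + -(m2 : ℤ) = -(i : ℤ) - m2 := by ring
      rw [e1, e2]; exact hw i h1 h2
  -- every element of X is periodic
  have per : ∀ x ∈ X, ∃ p : ℕ, 1 ≤ p ∧ ∀ i : ℤ, x (i + p) = x i := by
    intro x hx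
    -- windows, pigeonhole
    set f : ℕ → (Fin n → A) := fun m i => x (-(m : ℤ) - (i : ℤ) - 1) with hf
    obtain ⟨w, hw⟩ := Finite.exists_infinite_fiber f
    have hS : (f ⁻¹' {w}).Infinite := Set.infinite_coe_iff.mp hw
    have fwin : ∀ m1 m2 : ℕ, f m1 = f m2 →
        ∀ i : ℕ, 1 ≤ i → i ≤ n → x (-(i : ℤ) - m1) = x (-(i : ℤ) - m2) := by
      intro m1 m2 hfe i h1 h2
      have := congrFun hfe ⟨i - 1, by omega⟩
      simp only [hf] at this
      have e1 : -(m1 : ℤ) - ((i - 1 : ℕ) : ℤ) - 1 = -(i : ℤ) - m1 := by omega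
      have e2 : -(m2 : ℤ) - ((i - 1 : ℕ) : ℤ) - 1 = -(i : ℤ) - m2 := by omega
      rwa [e1, e2] at this
    obtain ⟨m1, hm1, _⟩ := hS.exists_gt 0
    obtain ⟨m2, hm2, h12⟩ := hS.exists_gt m1
    have hfe12 : f m2 = f m1 := by
      rw [Set.mem_preimage, Set.mem_singleton_iff] at hm1 hm2
      rw [hm1, hm2]
    refine ⟨m2 - m1, by omega, ?_⟩
    have hP : ∀ i : ℤ, -(m2 : ℤ) - n ≤ i → x (i + ((m2 - m1 : ℕ) : ℤ)) = x i := by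
      intro i hi
      have := agree x hx m2 m1 (fwin m2 m1 hfe12) (i + m2) (by omega)
      have e1 : i + m2 - m2 = i := by ring
      have e2 : i + (m2 : ℤ) - m1 = i + ((m2 - m1 : ℕ) : ℤ) := by omega
      rw [e1, e2] at this
      exact this.symm
    intro i
    obtain ⟨m3, hm3, h3big⟩ := hS.exists_gt (m2 + n + i.natAbs + (m2 - m1))
    have hfe31 : f m3 = f m1 := by
      rw [Set.mem_preimage, Set.mem_singleton_iff] at hm1 hm3
      rw [hm1, hm3]
    have hd : ∀ j : ℤ, -(m3 : ℤ) - n ≤ j → x j = x (j + ((m3 : ℤ) - m1)) := by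
      intro j hj
      have := agree x hx m3 m1 (fwin m3 m1 hfe31) (j + m3) (by omega)
      have e1 : j + m3 - m3 = j := by ring
      have e2 : j + (m3 : ℤ) - m1 = j + ((m3 : ℤ) - m1) := by ring
      rw [e1, e2] at this
      exact this
    have s1 := hd (i + ((m2 - m1 : ℕ) : ℤ)) (by omega)
    have s2 := hP (i + ((m3 : ℤ) - m1)) (by omega)
    have s3 := hd i (by omega)
    have e : i + ((m2 - m1 : ℕ) : ℤ) + ((m3 : ℤ) - m1)
        = i + ((m3 : ℤ) - m1) + ((m2 - m1 : ℕ) : ℤ) := by ring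
    rw [s1, e, s2, ← s3]
  refine ⟨?_, per⟩
  -- finiteness: the window map is injective on X
  set Φ : (ℤ → A) → (Fin n → A) := fun x i => x (-(i : ℤ) - 1) with hΦ
  have hinj : Set.InjOn Φ X := by
    intro x hx y hy hxy
    obtain ⟨p, hp1, hp⟩ := per x hx
    obtain ⟨q, hq1, hq⟩ := per y hy
    have hag : ∀ j : ℤ, -(n : ℤ) ≤ j → x j = y j := by
      apply det hinv n hpred hx hy
      intro i h1 h2
      have := congrFun hxy ⟨i - 1, by omega⟩
      simp only [hΦ] at this
      have e : -((i - 1 : ℕ) : ℤ) - 1 = -(i : ℤ) := by omega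
      rwa [e] at this
    funext j
    set t : ℕ := j.natAbs + n with ht
    have hpq : 1 ≤ p * q := Nat.one_le_iff_ne_zero.mpr (by positivity)
    have hx' : x j = x (j + ((t * (p * q) : ℕ) : ℤ)) := by
      have e : t * (p * q) = (t * q) * p := by ring
      rw [e, (per_mul hp (t * q) j)]
    have hy' : y j = y (j + ((t * (p * q) : ℕ) : ℤ)) := by
      have e : t * (p * q) = (t * p) * q := by ring
      rw [e, (per_mul hq (t * p) j)]
    have hbig : -(n : ℤ) ≤ j + ((t * (p * q) : ℕ) : ℤ) := by
      have : t ≤ t * (p * q) := Nat.le_mul_of_pos_right t (by omega)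
      omega
    rw [hx', hy', hag _ hbig]
  exact Set.Finite.of_finite_image (Set.toFinite _) hinj
end

section
/- Let T : X → X be a continuous surjection of a compact metric space such that (X, T) is minimal. Then the set of points y ∈ X whose preimage T^{-1}(y) consists of a single point contains a dense G_δ subset of X. -/
open Set Metric

private lemma irreducible_of_minimal
    {X : Type*} [MetricSpace X] [CompactSpace X] [Nonempty X]
    (T : X → X) (hT : Continuous T)
    (hmin : ∀ A : Set X, A.Nonempty → IsClosed A → Set.MapsTo T A A → A = Set.univ)
    (A : Set X) (hAc : IsClosed A) (hAonto : ∀ y, ∃ x ∈ A, T x = y) : A = Set.univ := by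
  classical
  let C : ℕ → Set X := fun n => Nat.rec A (fun _ Cn => A ∩ T ⁻¹' Cn) n
  have hC0 : C 0 = A := rfl
  have hCs : ∀ n, C (n + 1) = A ∩ T ⁻¹' (C n) := fun n => rfl
  have hclosed : ∀ n, IsClosed (C n) := by
    intro n; induction n with
    | zero => exact hAc
    | succ n ih => rw [hCs]; exact hAc.inter (ih.preimage hT)
  have honto : ∀ n, ∀ y ∈ C n, ∃ x ∈ C (n + 1), T x = y := by
    intro n y hy
    obtain ⟨x, hxA, hxy⟩ := hAonto y
    refine ⟨x, ?_, hxy⟩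
    rw [hCs]
    exact ⟨hxA, by simpa [Set.mem_preimage, hxy] using hy⟩
  have hne : ∀ n, (C n).Nonempty := by
    intro n; induction n with
    | zero =>
      obtain ⟨x, hx, _⟩ := hAonto (Classical.arbitrary X)
      exact ⟨x, hx⟩
    | succ n ih =>
      obtain ⟨y, hy⟩ := ih
      obtain ⟨x, hx, _⟩ := honto n y hy
      exact ⟨x, hx⟩
  have hanti : ∀ n, C (n + 1) ⊆ C n := by
    intro n; induction n with
    | zero => rw [hCs]; exact Set.inter_subset_left
    | succ n ih =>
      rw [hCs (n + 1), hCs n]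
      exact Set.inter_subset_inter_right _ (Set.preimage_mono ih)
  have hInter : (⋂ n, C n).Nonempty :=
    IsCompact.nonempty_iInter_of_sequence_nonempty_isCompact_isClosed C hanti hne
      (hclosed 0).isCompact hclosed
  have hmaps : Set.MapsTo T (⋂ n, C n) (⋂ n, C n) := by
    intro x hx
    simp only [Set.mem_iInter] at hx ⊢
    intro n
    have h := hx (n + 1)
    rw [hCs] at h
    exact h.2
  have huniv := hmin _ hInter (isClosed_iInter hclosed) hmaps
  have hsub : (⋂ n, C n) ⊆ A := Set.iInter_subset_of_subset 0 (by rw [hC0])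
  rw [huniv] at hsub
  exact Set.eq_univ_of_univ_subset hsub

/-- In a minimal system on a compact metric space, the set of points with a
unique preimage contains a dense Gδ set. -/
theorem minimal_unique_preimage_dense_Gdelta
    {X : Type*} [MetricSpace X] [CompactSpace X] [Nonempty X]
    (T : X → X) (hT : Continuous T) (hsurj : Function.Surjective T)
    (hmin : ∀ A : Set X, A.Nonempty → IsClosed A → Set.MapsTo T A A → A = Set.univ) :
    ∃ G : Set X, IsGδ G ∧ Dense G ∧ ∀ y ∈ G, ∃! x : X, T x = y := by
  classical
  have irr := irreducible_of_minimal T hT hmin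
  set O : ℕ → Set X := fun n => ⋃ x : X, (T '' (Metric.ball x (1 / (n + 1)))ᶜ)ᶜ with hO
  have hOopen : ∀ n, IsOpen (O n) := by
    intro n
    refine isOpen_iUnion fun x => ?_
    have : IsClosed (T '' (Metric.ball x (1 / (n + 1)))ᶜ) :=
      ((Metric.isOpen_ball.isClosed_compl).isCompact.image hT).isClosed
    exact this.isOpen_compl
  have hOdense : ∀ n, Dense (O n) := by
    intro n
    rw [dense_iff_inter_open]
    intro U hUopen hUne
    by_contra hemp
    push_neg at hemp
    obtain ⟨u, hu⟩ := hUne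
    obtain ⟨x₀, hx₀⟩ := hsurj u
    have hx₀U : x₀ ∈ T ⁻¹' U := by simp [hx₀, hu]
    set r : ℝ := 1 / (n + 1) with hr
    have hrpos : 0 < r := by positivity
    set A : Set X := (T ⁻¹' U)ᶜ ∪ (T ⁻¹' (closure U) ∩ (Metric.ball x₀ r)ᶜ) with hA
    have hAc : IsClosed A :=
      ((hUopen.preimage hT).isClosed_compl).union
        (((isClosed_closure).preimage hT).inter Metric.isOpen_ball.isClosed_compl)
    have hAonto : ∀ y, ∃ x ∈ A, T x = y := by
      intro y
      by_cases hyU : y ∈ U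
      · -- y ∈ U : since U ∩ O n = ∅, y ∉ O n, in particular y ∈ T '' (ball x₀ r)ᶜ
        have hyO : y ∉ O n := by
          intro hyO
          have : y ∈ U ∩ O n := ⟨hyU, hyO⟩
          rw [hemp] at this
          exact this
        rw [hO] at hyO
        simp only [Set.mem_iUnion, Set.mem_compl_iff, not_exists, not_not] at hyO
        obtain ⟨z, hzB, hzy⟩ := hyO x₀
        refine ⟨z, Or.inr ⟨?_, hzB⟩, hzy⟩
        exact subset_closure (by simpa [Set.mem_preimage, hzy] using hyU)
      · obtain ⟨x, hxy⟩ := hsurj y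
        exact ⟨x, Or.inl (by simp [Set.mem_preimage, hxy, hyU]), hxy⟩
    have hAuniv := irr A hAc hAonto
    have hx₀A : x₀ ∈ A := hAuniv ▸ Set.mem_univ x₀
    rcases hx₀A with h | h
    · exact h hx₀U
    · exact h.2 (Metric.mem_ball_self hrpos)
  refine ⟨⋂ n, O n, ?_, ?_, ?_⟩
  · exact .iInter fun n => (hOopen n).isGδ
  · exact dense_iInter_of_isOpen hOopen hOdense
  · intro y hy
    obtain ⟨x, hx⟩ := hsurj y
    refine ⟨x, hx, fun b hb => ?_⟩
    have key : ∀ n : ℕ, dist b x < 2 / (n + 1) := by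
      intro n
      have hyn : y ∈ O n := Set.mem_iInter.mp hy n
      rw [hO] at hyn
      simp only [Set.mem_iUnion, Set.mem_compl_iff] at hyn
      obtain ⟨c, hc⟩ := hyn
      have hmem : ∀ z : X, T z = y → z ∈ Metric.ball c (1 / (n + 1)) := by
        intro z hz
        by_contra hzc
        exact hc ⟨z, hzc, hz⟩
      have hbc := hmem b hb
      have hxc := hmem x hx
      rw [Metric.mem_ball] at hbc hxc
      calc dist b x ≤ dist b c + dist x c := dist_triangle_right b x c
        _ < 1 / (n + 1) + 1 / (n + 1) := add_lt_add hbc hxc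
        _ = 2 / (n + 1) := by ring
    by_contra hne
    have hdpos : 0 < dist b x := dist_pos.mpr hne
    obtain ⟨n, hn⟩ := exists_nat_gt (2 / dist b x)
    have hn1 : (2 : ℝ) / dist b x < n + 1 := lt_trans hn (by linarith)
    have : 2 / ((n : ℝ) + 1) < dist b x := by
      rw [div_lt_iff₀ (by positivity)]
      rw [div_lt_iff₀ hdpos] at hn1
      linarith
    exact absurd (key n) (not_lt.mpr this.le)
end

section
/- There is no minimal everywhere non-invertible system: if T : X → X is a continuous surjection of a compact metric space and (X, T) is minimal, then there exists a point y ∈ X with exactly one preimage, i.e., it is not the case that #T^{-1}(x) ≥ 2 for every x ∈ X. -/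
open Set Metric

/-- There is no minimal everywhere non-invertible system: a minimal continuous
surjection of a compact metric space has a point with exactly one preimage. -/
theorem no_minimal_everywhere_noninvertible
    {X : Type*} [MetricSpace X] [CompactSpace X] [Nonempty X]
    (T : X → X) (hT : Continuous T) (hsurj : Function.Surjective T)
    (hmin : ∀ A : Set X, A.Nonempty → IsClosed A → Set.MapsTo T A A → A = Set.univ) :
    ∃ y : X, ∃! x : X, T x = y := by
  by_contra hcon
  push_neg at hcon
  -- every point has two distinct preimages
  have h2 : ∀ y : X, ∃ p q : X, T p = y ∧ T q = y ∧ p ≠ q := by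
    intro y
    obtain ⟨x, hx⟩ := hsurj y
    by_contra h
    push_neg at h
    exact hcon y ⟨x, hx, fun z hz => h z x hz hx⟩
  -- sets of points with two (1/(n+1))-separated preimages
  set C : ℕ → Set X :=
    fun n => (fun z : X × X => T z.1) ''
      {z : X × X | T z.1 = T z.2 ∧ 1 / ((n : ℝ) + 1) ≤ dist z.1 z.2} with hCdef
  have hKclosed : ∀ n : ℕ,
      IsClosed {z : X × X | T z.1 = T z.2 ∧ 1 / ((n : ℝ) + 1) ≤ dist z.1 z.2} := by
    intro n
    exact (isClosed_eq (hT.comp continuous_fst) (hT.comp continuous_snd)).inter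
      (isClosed_le continuous_const continuous_dist)
  have hCclosed : ∀ n, IsClosed (C n) := by
    intro n
    exact (((hKclosed n).isCompact).image (hT.comp continuous_fst)).isClosed
  have hUnion : (⋃ n, C n) = univ := by
    ext y
    simp only [mem_iUnion, mem_univ, iff_true]
    obtain ⟨p, q, hp, hq, hpq⟩ := h2 y
    obtain ⟨n, hn⟩ := exists_nat_one_div_lt (dist_pos.mpr hpq)
    exact ⟨n, ⟨(p, q), ⟨hp.trans hq.symm, hn.le⟩, hp⟩⟩
  obtain ⟨n, hint⟩ := nonempty_interior_of_iUnion_of_closed hCclosed hUnion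
  obtain ⟨y₀, hy₀⟩ := hint
  obtain ⟨a, ha⟩ := hsurj y₀
  have hopen : IsOpen (T ⁻¹' interior (C n)) := isOpen_interior.preimage hT
  have hamem : a ∈ T ⁻¹' interior (C n) := by
    rw [mem_preimage, ha]; exact hy₀
  obtain ⟨r, hrpos, hball⟩ := Metric.isOpen_iff.mp hopen a hamem
  have hδpos : (0 : ℝ) < 1 / ((n : ℝ) + 1) := by positivity
  set r' : ℝ := min r (1 / ((n : ℝ) + 1) / 3) with hr'def
  have hr'pos : 0 < r' := lt_min hrpos (by positivity)
  set F : Set X := (ball a r')ᶜ with hFdef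
  have hFclosed : IsClosed F := isOpen_ball.isClosed_compl
  -- every point has a preimage in F
  have hTF : ∀ y : X, ∃ x, x ∈ F ∧ T x = y := by
    intro y
    by_contra h
    push_neg at h
    obtain ⟨x, hx⟩ := hsurj y
    have hxball : x ∈ ball a r' := by
      by_contra hh; exact h x hh hx
    have hyC : y ∈ C n := by
      apply interior_subset
      have hx2 : x ∈ ball a r := mem_ball.mpr (lt_of_lt_of_le (mem_ball.mp hxball) (min_le_left _ _))
      have := hball hx2
      rw [mem_preimage, hx] at this
      exact this
    obtain ⟨⟨p, q⟩, ⟨hpq, hd⟩, hTp⟩ := hyC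
    have hpb : p ∈ ball a r' := by
      by_contra hh; exact h p hh hTp
    have hqb : q ∈ ball a r' := by
      by_contra hh; exact h q hh (hpq.symm.trans hTp)
    have h1 : dist p a < r' := mem_ball.mp hpb
    have h2q : dist q a < r' := mem_ball.mp hqb
    have h3 : dist p q ≤ dist p a + dist a q := dist_triangle p a q
    have h4 : dist a q = dist q a := dist_comm a q
    have h5 : r' ≤ 1 / ((n : ℝ) + 1) / 3 := min_le_right _ _
    simp only at hd
    linarith
  choose g hgF hgT using hTF
  have x₀ : X := Classical.arbitrary X
  set c : ℕ → X := fun k => g (g^[k] x₀) with hcdef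
  have hcF : ∀ k, c k ∈ F := fun k => hgF _
  have hcT : ∀ k, T (c (k + 1)) = c k := by
    intro k
    show T (g (g^[k + 1] x₀)) = g (g^[k] x₀)
    rw [hgT, Function.iterate_succ_apply']
  have hiter : ∀ k m, T^[k] (c (m + k)) = c m := by
    intro k
    induction k with
    | zero => intro m; simp
    | succ k ih =>
      intro m
      have heq : m + (k + 1) = (m + k) + 1 := rfl
      rw [Function.iterate_succ_apply, heq, hcT (m + k)]
      exact ih m
  set Zn : ℕ → Set X := fun n => {x | ∀ k, k ≤ n → T^[k] x ∈ F} with hZndef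
  have hZnclosed : ∀ m, IsClosed (Zn m) := by
    intro m
    have : Zn m = ⋂ k, ⋂ _ : k ≤ m, T^[k] ⁻¹' F := by
      ext x; simp [hZndef, Set.mem_iInter]
    rw [this]
    exact isClosed_iInter fun k => isClosed_iInter fun _ => hFclosed.preimage (hT.iterate k)
  have hZnne : ∀ m, (Zn m).Nonempty := by
    intro m
    refine ⟨c m, fun k hk => ?_⟩
    rw [show m = (m - k) + k from (Nat.sub_add_cancel hk).symm, hiter k (m - k)]
    exact hcF _
  have hZnanti : ∀ m, Zn (m + 1) ⊆ Zn m := fun m x hx k hk => hx k (hk.trans (Nat.le_succ m))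
  have hZne : (⋂ m, Zn m).Nonempty :=
    IsCompact.nonempty_iInter_of_sequence_nonempty_isCompact_isClosed Zn hZnanti hZnne
      ((hZnclosed 0).isCompact) hZnclosed
  have hZF : ∀ x ∈ ⋂ m, Zn m, ∀ k, T^[k] x ∈ F := by
    intro x hx k
    exact (mem_iInter.mp hx k) k le_rfl
  have hmaps : Set.MapsTo T (⋂ m, Zn m) (⋂ m, Zn m) := by
    intro x hx
    refine mem_iInter.mpr fun m k hk => ?_
    show T^[k] (T x) ∈ F
    rw [← Function.iterate_succ_apply]
    exact hZF x hx (k + 1)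
  have hZuniv := hmin _ hZne (isClosed_iInter hZnclosed) hmaps
  have haZ : a ∈ ⋂ m, Zn m := hZuniv ▸ mem_univ a
  have := hZF a haZ 0
  simp only [Function.iterate_zero, id_eq, hFdef, mem_compl_iff] at this
  exact this (mem_ball_self hr'pos)
end
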